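/- Let r* = 1/(36√2) and R* = 6√2. Then: (i) for every a ∈ [0, √2] there exists a unique solution h_a ∈ C²₀([0, r*]) of the shifted Cauchy problem with ‖h_a''‖_{C⁰([0,r*])} ≤ R*; (ii) the map a ↦ h_a is Lipschitz from [0, √2] into C²₀([0, r*]): for all a₁, a₂ ∈ [0, √2] one has ‖(h_{a₁} - h_{a₂})''‖_{C⁰([0,r*])} ≤ (37/12)|a₁ - a₂|. -/

import Mathlib

open Set

/-- First derivative within `[0, r]`. -/
noncomputable def d1 (r : ℝ) (f : ℝ → ℝ) : ℝ → ℝ := derivWithin f (Icc 0 r)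

/-- Second derivative within `[0, r]`. -/
noncomputable def d2 (r : ℝ) (f : ℝ → ℝ) : ℝ → ℝ := derivWithin (d1 r f) (Icc 0 r)

/-- `h ∈ C²₀([0,r])` solves the shifted Cauchy problem
`h''(x) = (1 + h'(x)²)[h'(x)(x - 1/x) - h(x) - a]` for `x ∈ (0, r]`,
with `h(0) = h'(0) = 0`. -/
def ShiftedCP (a r : ℝ) (h : ℝ → ℝ) : Prop :=
  ContDiffOn ℝ 2 h (Icc 0 r) ∧ h 0 = 0 ∧ d1 r h 0 = 0 ∧
  ∀ x ∈ Ioc (0:ℝ) r,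
    d2 r h x = (1 + (d1 r h x) ^ 2) * (d1 r h x * (x - 1 / x) - h x - a)

noncomputable def rstar : ℝ := 1 / (36 * Real.sqrt 2)

noncomputable def Rstar : ℝ := 6 * Real.sqrt 2

/-! Write `K = h''`, so that `h' = ∫₀ˣ K`, `h = ∫₀ˣ h'` and `S(x) := h'(x) / x = ∫₀¹ K(s x) ds`.
The equation reads `K + S = G` with `G = (1 + h'²)(x h' - h - a) - h'² S`, which is bounded near
`0`; as `K + S = (x h')' / x`, this means `x h' = ∫₀ˣ t G`, i.e. `S(x) = ∫₀¹ s G(s x) ds`. So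
`K = G - ∫₀¹ s G(s ·) ds` is a fixed-point equation on `C⁰([0, r*])` without singularity. After
truncating `K` at height `R*`, its right-hand side is a `1/3`-contraction that is `37/18`-Lipschitz
in `a`, so the fixed point is unique and `(37/18) / (1 - 1/3) = 37/12`-Lipschitz in `a`. -/

namespace ShiftedCP

open intervalIntegral Topology

section Operators

variable {F G : ℝ → ℝ} {x M : ℝ}

noncomputable def prim (F : ℝ → ℝ) (x : ℝ) : ℝ := ∫ t in (0:ℝ)..x, F t

noncomputable def mean (F : ℝ → ℝ) (x : ℝ) : ℝ := ∫ s in (0:ℝ)..1, F (s * x)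

noncomputable def weightedMean (F : ℝ → ℝ) (x : ℝ) : ℝ := ∫ s in (0:ℝ)..1, s * F (s * x)

@[simp] lemma prim_zero (F : ℝ → ℝ) : prim F 0 = 0 := integral_same

lemma hasDerivAt_prim (hF : Continuous F) (x : ℝ) : HasDerivAt (prim F) (F x) x :=
  (hF.integral_hasStrictDerivAt 0 x).hasDerivAt

lemma differentiable_prim (hF : Continuous F) : Differentiable ℝ (prim F) :=
  fun x => (hasDerivAt_prim hF x).differentiableAt

lemma continuous_prim (hF : Continuous F) : Continuous (prim F) :=
  (differentiable_prim hF).continuous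

lemma deriv_prim (hF : Continuous F) : deriv (prim F) = F :=
  funext fun x => (hasDerivAt_prim hF x).deriv

lemma contDiff_prim_prim (hF : Continuous F) : ContDiff ℝ 2 (prim (prim F)) := by
  have hp : ContDiff ℝ 1 (prim F) :=
    contDiff_one_iff_deriv.2 ⟨differentiable_prim hF, by rwa [deriv_prim hF]⟩
  refine contDiff_succ_iff_deriv (n := 1).2 ⟨differentiable_prim (continuous_prim hF), by simp, ?_⟩
  rwa [deriv_prim (continuous_prim hF)]

lemma prim_sub (hF : Continuous F) (hG : Continuous G) (x : ℝ) :
    prim (F - G) x = prim F x - prim G x :=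
  integral_sub (hF.intervalIntegrable _ _) (hG.intervalIntegrable _ _)

lemma mean_sub (hF : Continuous F) (hG : Continuous G) (x : ℝ) :
    mean (F - G) x = mean F x - mean G x :=
  integral_sub ((hF.comp (continuous_mul_const x)).intervalIntegrable _ _)
    ((hG.comp (continuous_mul_const x)).intervalIntegrable _ _)

lemma weightedMean_sub (hF : Continuous F) (hG : Continuous G) (x : ℝ) :
    weightedMean (F - G) x = weightedMean F x - weightedMean G x := by
  simp only [weightedMean, Pi.sub_apply, mul_sub]
  exact integral_sub
    ((continuous_id.mul (hF.comp (continuous_mul_const x))).intervalIntegrable _ _)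
    ((continuous_id.mul (hG.comp (continuous_mul_const x))).intervalIntegrable _ _)

lemma continuous_mean (hF : Continuous F) : Continuous (mean F) :=
  continuous_parametric_intervalIntegral_of_continuous' (f := fun x s => F (s * x))
    (hF.comp (continuous_snd.mul continuous_fst)) 0 1

lemma continuous_weightedMean (hF : Continuous F) : Continuous (weightedMean F) :=
  continuous_parametric_intervalIntegral_of_continuous' (f := fun x s => s * F (s * x))
    (continuous_snd.mul (hF.comp (continuous_snd.mul continuous_fst))) 0 1

lemma mul_mean (F : ℝ → ℝ) (x : ℝ) : x * mean F x = prim F x := by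
  rcases eq_or_ne x 0 with rfl | hx
  · simp
  · rw [mean, integral_comp_mul_right F hx, smul_eq_mul, zero_mul, one_mul, prim,
      mul_inv_cancel_left₀ hx]

lemma sq_mul_weightedMean (F : ℝ → ℝ) (x : ℝ) :
    x ^ 2 * weightedMean F x = prim (fun t => t * F t) x := by
  rcases eq_or_ne x 0 with rfl | hx
  · simp
  · have h : ∀ s, s * F (s * x) = x⁻¹ * (s * x * F (s * x)) := fun s => by field_simp
    simp_rw [weightedMean, h, integral_const_mul]
    rw [integral_comp_mul_right (fun t => t * F t) hx, smul_eq_mul, zero_mul, one_mul, prim]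
    field_simp

lemma abs_prim_le (hx : 0 ≤ x) (hF : ∀ t ∈ Icc 0 x, |F t| ≤ M) : |prim F x| ≤ M * x := by
  have := norm_integral_le_of_norm_le_const (a := 0) (b := x) (f := F) (C := M)
    fun t ht => hF t (Ioc_subset_Icc_self (uIoc_of_le hx ▸ ht))
  simpa [prim, abs_of_nonneg hx] using this

lemma abs_mean_le (hx : 0 ≤ x) (hF : ∀ t ∈ Icc 0 x, |F t| ≤ M) : |mean F x| ≤ M := by
  have := norm_integral_le_of_norm_le_const (a := 0) (b := 1) (f := fun s => F (s * x)) (C := M)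
    fun s hs => by
      rw [uIoc_of_le zero_le_one] at hs
      exact hF _ ⟨mul_nonneg hs.1.le hx, mul_le_of_le_one_left hx hs.2⟩
  simpa [mean] using this

lemma abs_weightedMean_le (hx : 0 ≤ x) (hF : ∀ t ∈ Icc 0 x, |F t| ≤ M) :
    |weightedMean F x| ≤ M := by
  have := norm_integral_le_of_norm_le_const (a := 0) (b := 1) (f := fun s => s * F (s * x))
    (C := M) fun s hs => by
      rw [uIoc_of_le zero_le_one] at hs
      rw [Real.norm_eq_abs, abs_mul, abs_of_pos hs.1]
      exact (mul_le_of_le_one_left (abs_nonneg _) hs.2).trans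
        (hF _ ⟨mul_nonneg hs.1.le hx, mul_le_of_le_one_left hx hs.2⟩)
  simpa [weightedMean] using this

lemma abs_sub_weightedMean_le (hx : 0 ≤ x) (hF : ∀ t ∈ Icc 0 x, |F t| ≤ M) :
    |F x - weightedMean F x| ≤ 2 * M := by
  have h1 := hF x ⟨hx, le_rfl⟩
  have h2 := abs_weightedMean_le hx hF
  linarith [abs_sub (F x) (weightedMean F x)]

end Operators

section Correspondence

variable {G K : ℝ → ℝ} {a r x : ℝ}

lemma eq_of_hasDerivAt_zero {f : ℝ → ℝ} {b : ℝ} (hf : ContinuousOn f (Icc a b))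
    (hd : ∀ y ∈ Ioo a b, HasDerivAt f 0 y) (hx : x ∈ Icc a b) : f x = f a := by
  rcases hx.1.eq_or_lt with rfl | hax
  · rfl
  obtain ⟨c, -, hc⟩ := exists_hasDerivAt_eq_slope f (fun _ => 0) hax
    (hf.mono (Icc_subset_Icc le_rfl hx.2)) fun y hy => hd y ⟨hy.1, hy.2.trans_le hx.2⟩
  rw [eq_comm, div_eq_zero_iff, sub_eq_zero, sub_eq_zero] at hc
  exact hc.resolve_right hax.ne'

lemma eqOn_prim_of_hasDerivWithinAt {f : ℝ → ℝ} (hK : Continuous K)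
    (hf : ∀ t ∈ Icc 0 r, HasDerivWithinAt f (K t) (Icc 0 r) t) (hf0 : f 0 = 0) :
    EqOn f (prim K) (Icc 0 r) := by
  intro x hx
  have hcont : ContinuousOn (fun y => f y - prim K y) (Icc 0 r) :=
    ContinuousOn.sub (fun t ht => (hf t ht).continuousWithinAt) (continuous_prim hK).continuousOn
  have hd : ∀ y ∈ Ioo 0 r, HasDerivAt (fun y => f y - prim K y) 0 y := fun y hy =>
    (((hf y (Ioo_subset_Icc_self hy)).hasDerivAt (Icc_mem_nhds hy.1 hy.2)).sub
      (hasDerivAt_prim hK y)).congr_deriv (sub_self _)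
  have := eq_of_hasDerivAt_zero hcont hd hx
  rwa [hf0, prim_zero, sub_zero, sub_eq_zero] at this

lemma hasDerivAt_mul_weightedMean (hG : Continuous G) (hx : x ≠ 0) :
    HasDerivAt (fun y => y * weightedMean G y) (G x - weightedMean G x) x := by
  have hq := (hasDerivAt_prim (F := fun t => t * G t) (by fun_prop) x).div (hasDerivAt_id x) hx
  have heq : (fun y => prim (fun t => t * G t) y / y) =ᶠ[𝓝 x] fun y => y * weightedMean G y := by
    filter_upwards [isOpen_ne.mem_nhds hx] with y hy
    rw [← sq_mul_weightedMean]
    field_simp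
  refine (hq.congr_of_eventuallyEq heq.symm).congr_deriv ?_
  rw [id, mul_one, ← sq_mul_weightedMean]
  field_simp

lemma weightedMean_eq_mean_of_eq_sub_mean (hK : Continuous K) (hG : Continuous G)
    (h : ∀ y ∈ Ioo 0 r, K y = G y - mean K y) (hx : x ∈ Ioc 0 r) :
    weightedMean G x = mean K x := by
  have hcont : Continuous fun y => y * prim K y - prim (fun t => t * G t) y :=
    (continuous_id.mul (continuous_prim hK)).sub (continuous_prim (continuous_id.mul hG))
  have hd : ∀ y ∈ Ioo 0 r, HasDerivAt (fun y => y * prim K y - prim (fun t => t * G t) y) 0 y :=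
      fun y hy => by
    refine (((hasDerivAt_id y).mul (hasDerivAt_prim hK y)).sub
      (hasDerivAt_prim (F := fun t => t * G t) (by fun_prop) y)).congr_deriv ?_
    rw [h y hy, ← mul_mean]
    simp only [id]
    ring
  have hw := eq_of_hasDerivAt_zero hcont.continuousOn hd (Ioc_subset_Icc_self hx)
  rw [← sq_mul_weightedMean, ← mul_mean, ← sq_mul_weightedMean, ← mul_mean] at hw
  have : x ^ 2 * (weightedMean G x - mean K x) = 0 := by linear_combination -hw
  simpa [hx.1.ne', sub_eq_zero] using this

lemma weightedMean_eq_mean_of_eq_sub_weightedMean (hK : Continuous K) (hG : Continuous G)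
    (h : ∀ y ∈ Ioo 0 r, K y = G y - weightedMean G y) (hx : x ∈ Ioc 0 r) :
    weightedMean G x = mean K x := by
  have hcont : Continuous fun y => prim K y - y * weightedMean G y :=
    (continuous_prim hK).sub (continuous_id.mul (continuous_weightedMean hG))
  have hd : ∀ y ∈ Ioo 0 r, HasDerivAt (fun y => prim K y - y * weightedMean G y) 0 y :=
      fun y hy => ((hasDerivAt_prim hK y).sub (hasDerivAt_mul_weightedMean hG hy.1.ne')).congr_deriv
        (by rw [h y hy, sub_self])
  have hv := eq_of_hasDerivAt_zero hcont.continuousOn hd (Ioc_subset_Icc_self hx)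
  rw [← mul_mean, prim_zero, zero_mul, sub_zero, sub_eq_zero] at hv
  exact (mul_left_cancel₀ hx.1.ne' hv).symm

end Correspondence

section Solutions

variable {F K g : ℝ → ℝ} {a r x : ℝ}

/-- With `P = h'(x)`, `Q = h(x)` and `S = h'(x) / x`, the equation reads `h'' = rhs - S`;
unlike the right-hand side of the equation, `rhs` stays bounded as `x → 0`. -/
def rhs (a x P Q S : ℝ) : ℝ := (1 + P ^ 2) * (P * x - Q - a) - P ^ 2 * S

lemma ode_eq_rhs_sub {P Q S : ℝ} (hx : x ≠ 0) (hS : x * S = P) :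
    (1 + P ^ 2) * (P * (x - 1 / x) - Q - a) = rhs a x P Q S - S := by
  subst hS
  unfold rhs
  field_simp
  ring

noncomputable def rhsOp (a : ℝ) (K : ℝ → ℝ) (x : ℝ) : ℝ :=
  rhs a x (prim K x) (prim (prim K) x) (mean K x)

noncomputable def picardOp (a : ℝ) (K : ℝ → ℝ) (x : ℝ) : ℝ :=
  rhsOp a K x - weightedMean (rhsOp a K) x

lemma continuous_rhsOp (hK : Continuous K) : Continuous (rhsOp a K) := by
  have := continuous_prim (continuous_prim hK)
  have := continuous_prim hK
  have := continuous_mean hK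
  unfold rhsOp rhs
  fun_prop

lemma continuous_picardOp (hK : Continuous K) : Continuous (picardOp a K) :=
  (continuous_rhsOp hK).sub (continuous_weightedMean (continuous_rhsOp hK))

lemma derivWithin_prim (hF : Continuous F) (hr : 0 < r) (hx : x ∈ Icc 0 r) :
    derivWithin (prim F) (Icc 0 r) x = F x :=
  (hasDerivAt_prim hF x).hasDerivWithinAt.derivWithin (uniqueDiffOn_Icc hr x hx)

lemma d1_prim_prim (hK : Continuous K) (hr : 0 < r) (hx : x ∈ Icc 0 r) :
    d1 r (prim (prim K)) x = prim K x :=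
  derivWithin_prim (continuous_prim hK) hr hx

lemma d2_prim_prim (hK : Continuous K) (hr : 0 < r) (hx : x ∈ Icc 0 r) :
    d2 r (prim (prim K)) x = K x := by
  rw [d2, derivWithin_congr (fun y hy => d1_prim_prim hK hr hy) (d1_prim_prim hK hr hx)]
  exact derivWithin_prim hK hr hx

lemma shiftedCP_prim_prim (hK : Continuous K) (hr : 0 < r)
    (hfix : ∀ x ∈ Ioc 0 r, K x = picardOp a K x) : ShiftedCP a r (prim (prim K)) := by
  refine ⟨(contDiff_prim_prim hK).contDiffOn, prim_zero _, ?_, fun x hx => ?_⟩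
  · rw [d1_prim_prim hK hr ⟨le_rfl, hr.le⟩, prim_zero]
  have hxI := Ioc_subset_Icc_self hx
  rw [d2_prim_prim hK hr hxI, d1_prim_prim hK hr hxI, ode_eq_rhs_sub hx.1.ne' (mul_mean K x),
    hfix x hx, picardOp, weightedMean_eq_mean_of_eq_sub_weightedMean hK (continuous_rhsOp hK)
      (fun y hy => hfix y (Ioo_subset_Ioc_self hy)) hx]
  rfl

lemma eqOn_prim_prim_and_picardOp_of_shiftedCP (hK : Continuous K) (hr : 0 < r)
    (hg : ShiftedCP a r g) (hKg : EqOn K (d2 r g) (Icc 0 r)) :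
    EqOn g (prim (prim K)) (Icc 0 r) ∧ EqOn K (picardOp a K) (Icc 0 r) := by
  obtain ⟨hCD, hg0, hd10, hode⟩ := hg
  have hd1 : ContDiffOn ℝ 1 (d1 r g) (Icc 0 r) := hCD.derivWithin (uniqueDiffOn_Icc hr) le_rfl
  have hp : EqOn (d1 r g) (prim K) (Icc 0 r) := eqOn_prim_of_hasDerivWithinAt hK
    (fun t ht => hKg ht ▸ (hd1.differentiableOn one_ne_zero t ht).hasDerivWithinAt) hd10
  have hq : EqOn g (prim (prim K)) (Icc 0 r) := eqOn_prim_of_hasDerivWithinAt (continuous_prim hK)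
    (fun t ht => hp ht ▸ (hCD.differentiableOn two_ne_zero t ht).hasDerivWithinAt) hg0
  have hK_ode : ∀ x ∈ Ioc 0 r, K x = rhsOp a K x - mean K x := fun x hx => by
    have hxI := Ioc_subset_Icc_self hx
    rw [hKg hxI, hode x hx, hp hxI, hq hxI, ode_eq_rhs_sub hx.1.ne' (mul_mean K x)]
    rfl
  refine ⟨hq, EqOn.of_subset_closure (fun x hx => ?_) hK.continuousOn
    (continuous_picardOp hK).continuousOn Ioc_subset_Icc_self (closure_Ioc hr.ne).ge⟩
  rw [picardOp, weightedMean_eq_mean_of_eq_sub_mean hK (continuous_rhsOp hK)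
    (fun y hy => hK_ode y (Ioo_subset_Ioc_self hy)) hx]
  exact hK_ode x hx

end Solutions

section RhsEstimates

variable {a b x P P' Q Q' S S' δ : ℝ}

lemma abs_mul_le_of_abs_le {u v U V : ℝ} (hu : |u| ≤ U) (hv : |v| ≤ V) : |u * v| ≤ U * V :=
  abs_mul u v ▸ mul_le_mul hu hv (abs_nonneg v) ((abs_nonneg u).trans hu)

lemma abs_one_add_sq_le (hP : |P| ≤ 1 / 6) : |1 + P ^ 2| ≤ 37 / 36 := by
  rw [abs_of_pos (by positivity)]
  nlinarith [abs_le.1 hP]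

lemma abs_sq_sub_sq_le (hP : |P| ≤ 1 / 6) (hP' : |P'| ≤ 1 / 6) (hdP : |P - P'| ≤ δ / 48) :
    |P ^ 2 - P' ^ 2| ≤ δ / 144 := by
  have hsum : |P + P'| ≤ 1 / 3 := (abs_add_le P P').trans (by linarith)
  calc |P ^ 2 - P' ^ 2| = |(P + P') * (P - P')| := by congr 1; ring
    _ ≤ 1 / 3 * (δ / 48) := abs_mul_le_of_abs_le hsum hdP
    _ = δ / 144 := by ring

lemma abs_affine_le (ha : |a| ≤ 3 / 2) (hx : |x| ≤ 1 / 48) (hP : |P| ≤ 1 / 6)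
    (hQ : |Q| ≤ 1 / 288) : |P * x - Q - a| ≤ 217 / 144 := by
  have := abs_mul_le_of_abs_le hP hx
  linarith [abs_sub (P * x - Q) a, abs_sub (P * x) Q]

lemma abs_sq_le (hP : |P| ≤ 1 / 6) : |P ^ 2| ≤ 1 / 36 := by
  rw [abs_pow]
  nlinarith [abs_nonneg P]

lemma abs_rhs_le (ha : |a| ≤ 3 / 2) (hx : |x| ≤ 1 / 48) (hP : |P| ≤ 1 / 6)
    (hQ : |Q| ≤ 1 / 288) (hS : |S| ≤ 9) : |rhs a x P Q S| ≤ 2 := by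
  have h1 := abs_mul_le_of_abs_le (abs_one_add_sq_le hP) (abs_affine_le ha hx hP hQ)
  have h2 := abs_mul_le_of_abs_le (abs_sq_le hP) hS
  unfold rhs
  linarith [abs_sub ((1 + P ^ 2) * (P * x - Q - a)) (P ^ 2 * S)]

lemma abs_rhs_sub_rhs_le (ha : |a| ≤ 3 / 2) (hx : |x| ≤ 1 / 48) (hP : |P| ≤ 1 / 6)
    (hP' : |P'| ≤ 1 / 6) (hQ : |Q| ≤ 1 / 288) (hS' : |S'| ≤ 9) (hdP : |P - P'| ≤ δ / 48)
    (hdQ : |Q - Q'| ≤ δ / 2304) (hdS : |S - S'| ≤ δ) :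
    |rhs a x P Q S - rhs a x P' Q' S'| ≤ δ / 6 := by
  have hdP2 := abs_sq_sub_sq_le hP hP' hdP
  have hlin : |(P - P') * x - (Q - Q')| ≤ δ / 1152 := by
    have := abs_mul_le_of_abs_le hdP hx
    linarith [abs_sub ((P - P') * x) (Q - Q')]
  have h1 := abs_mul_le_of_abs_le hdP2 (abs_affine_le ha hx hP hQ)
  have h2 := abs_mul_le_of_abs_le (abs_one_add_sq_le hP') hlin
  have h3 := abs_mul_le_of_abs_le (abs_sq_le hP) hdS
  have h4 := abs_mul_le_of_abs_le hdP2 hS'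
  have hδ : 0 ≤ δ := (abs_nonneg _).trans hdS
  calc |rhs a x P Q S - rhs a x P' Q' S'|
      = |(P ^ 2 - P' ^ 2) * (P * x - Q - a) + (1 + P' ^ 2) * ((P - P') * x - (Q - Q'))
          - (P ^ 2 * (S - S') + (P ^ 2 - P' ^ 2) * S')| := by unfold rhs; congr 1; ring
    _ ≤ δ / 6 := by
      linarith [abs_sub ((P ^ 2 - P' ^ 2) * (P * x - Q - a)
          + (1 + P' ^ 2) * ((P - P') * x - (Q - Q'))) (P ^ 2 * (S - S') + (P ^ 2 - P' ^ 2) * S'),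
        abs_add_le ((P ^ 2 - P' ^ 2) * (P * x - Q - a))
          ((1 + P' ^ 2) * ((P - P') * x - (Q - Q'))),
        abs_add_le (P ^ 2 * (S - S')) ((P ^ 2 - P' ^ 2) * S')]

lemma abs_rhs_sub_rhs_param_le (hP : |P| ≤ 1 / 6) :
    |rhs a x P Q S - rhs b x P Q S| ≤ 37 / 36 * |a - b| := by
  calc |rhs a x P Q S - rhs b x P Q S| = |(1 + P ^ 2) * (b - a)| := by unfold rhs; congr 1; ring
    _ ≤ 37 / 36 * |a - b| :=
      abs_sub_comm a b ▸ abs_mul_le_of_abs_le (abs_one_add_sq_le hP) le_rfl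

end RhsEstimates

lemma sqrt_two_le : √2 ≤ 3 / 2 := by
  nlinarith [Real.sq_sqrt (zero_le_two : (0:ℝ) ≤ 2), Real.sqrt_nonneg 2]

lemma le_sqrt_two : 4 / 3 ≤ √2 := by
  nlinarith [Real.sq_sqrt (zero_le_two : (0:ℝ) ≤ 2), Real.sqrt_nonneg 2]

lemma rstar_pos : 0 < rstar := by
  have := le_sqrt_two
  unfold rstar
  positivity

lemma rstar_le : rstar ≤ 1 / 48 := by
  unfold rstar
  rw [div_le_div_iff₀ (by nlinarith [le_sqrt_two]) (by norm_num)]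
  nlinarith [le_sqrt_two]

lemma four_le_Rstar : 4 ≤ Rstar := by
  unfold Rstar
  nlinarith [le_sqrt_two]

lemma Rstar_le : Rstar ≤ 9 := by
  unfold Rstar
  nlinarith [sqrt_two_le]

lemma Rstar_mul_rstar : Rstar * rstar = 1 / 6 := by
  have : √2 ≠ 0 := by positivity
  unfold Rstar rstar
  field_simp
  ring

section OperatorEstimates

variable {K K' : ℝ → ℝ} {a b x δ : ℝ}

lemma abs_le_of_mem_Icc_rstar (hx : x ∈ Icc 0 rstar) : |x| ≤ 1 / 48 :=
  abs_le.2 ⟨by linarith [hx.1], hx.2.trans rstar_le⟩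

lemma abs_prim_le_sixth (hK : ∀ t ∈ Icc 0 rstar, |K t| ≤ Rstar) (hx : x ∈ Icc 0 rstar) :
    |prim K x| ≤ 1 / 6 :=
  (abs_prim_le hx.1 fun t ht => hK t (Icc_subset_Icc le_rfl hx.2 ht)).trans
    ((mul_le_mul_of_nonneg_left hx.2 (by linarith [four_le_Rstar])).trans_eq Rstar_mul_rstar)

lemma abs_prim_prim_le (hK : ∀ t ∈ Icc 0 rstar, |K t| ≤ Rstar) (hx : x ∈ Icc 0 rstar) :
    |prim (prim K) x| ≤ 1 / 288 :=
  (abs_prim_le hx.1 fun t ht => abs_prim_le_sixth hK (Icc_subset_Icc le_rfl hx.2 ht)).trans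
    (by linarith [hx.2.trans rstar_le])

lemma abs_rhsOp_le (ha : |a| ≤ 3 / 2) (hK : ∀ t ∈ Icc 0 rstar, |K t| ≤ Rstar)
    (hx : x ∈ Icc 0 rstar) : |rhsOp a K x| ≤ 2 :=
  abs_rhs_le ha (abs_le_of_mem_Icc_rstar hx) (abs_prim_le_sixth hK hx) (abs_prim_prim_le hK hx)
    ((abs_mean_le hx.1 fun t ht => hK t (Icc_subset_Icc le_rfl hx.2 ht)).trans Rstar_le)

lemma abs_rhsOp_sub_rhsOp_le (ha : |a| ≤ 3 / 2) (hKc : Continuous K) (hK'c : Continuous K')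
    (hK : ∀ t ∈ Icc 0 rstar, |K t| ≤ Rstar) (hK' : ∀ t ∈ Icc 0 rstar, |K' t| ≤ Rstar)
    (hKK' : ∀ t ∈ Icc 0 rstar, |K t - K' t| ≤ δ) (hx : x ∈ Icc 0 rstar) :
    |rhsOp a K x - rhsOp a K' x| ≤ δ / 6 := by
  have hδ : 0 ≤ δ := (abs_nonneg _).trans (hKK' 0 ⟨le_rfl, rstar_pos.le⟩)
  have hdP : ∀ y ∈ Icc 0 rstar, |prim K y - prim K' y| ≤ δ / 48 := fun y hy => by
    rw [← prim_sub hKc hK'c]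
    refine (abs_prim_le hy.1 fun t ht => hKK' t (Icc_subset_Icc le_rfl hy.2 ht)).trans ?_
    nlinarith [hy.2.trans rstar_le]
  have hdQ : |prim (prim K) x - prim (prim K') x| ≤ δ / 2304 := by
    rw [← prim_sub (continuous_prim hKc) (continuous_prim hK'c)]
    refine (abs_prim_le hx.1 fun t ht => hdP t (Icc_subset_Icc le_rfl hx.2 ht)).trans ?_
    nlinarith [hx.2.trans rstar_le]
  have hdS : |mean K x - mean K' x| ≤ δ := by
    rw [← mean_sub hKc hK'c]
    exact abs_mean_le hx.1 fun t ht => hKK' t (Icc_subset_Icc le_rfl hx.2 ht)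
  exact abs_rhs_sub_rhs_le ha (abs_le_of_mem_Icc_rstar hx) (abs_prim_le_sixth hK hx)
    (abs_prim_le_sixth hK' hx) (abs_prim_prim_le hK hx)
    ((abs_mean_le hx.1 fun t ht => hK' t (Icc_subset_Icc le_rfl hx.2 ht)).trans Rstar_le)
    (hdP x hx) hdQ hdS

lemma abs_rhsOp_sub_rhsOp_param_le (hK : ∀ t ∈ Icc 0 rstar, |K t| ≤ Rstar)
    (hx : x ∈ Icc 0 rstar) : |rhsOp a K x - rhsOp b K x| ≤ 37 / 36 * |a - b| :=
  abs_rhs_sub_rhs_param_le (abs_prim_le_sixth hK hx)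

lemma picardOp_sub_picardOp (hKc : Continuous K) (hK'c : Continuous K') :
    picardOp a K x - picardOp b K' x =
      (rhsOp a K - rhsOp b K') x - weightedMean (rhsOp a K - rhsOp b K') x := by
  rw [weightedMean_sub (continuous_rhsOp hKc) (continuous_rhsOp hK'c), Pi.sub_apply, picardOp,
    picardOp]
  ring

lemma abs_picardOp_le (ha : |a| ≤ 3 / 2) (hK : ∀ t ∈ Icc 0 rstar, |K t| ≤ Rstar)
    (hx : x ∈ Icc 0 rstar) : |picardOp a K x| ≤ 4 := by
  have := abs_sub_weightedMean_le hx.1 fun t ht =>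
    abs_rhsOp_le ha hK (Icc_subset_Icc le_rfl hx.2 ht)
  rw [picardOp]
  linarith

lemma abs_picardOp_sub_picardOp_le (ha : |a| ≤ 3 / 2) (hKc : Continuous K)
    (hK'c : Continuous K') (hK : ∀ t ∈ Icc 0 rstar, |K t| ≤ Rstar)
    (hK' : ∀ t ∈ Icc 0 rstar, |K' t| ≤ Rstar) (hKK' : ∀ t ∈ Icc 0 rstar, |K t - K' t| ≤ δ)
    (hx : x ∈ Icc 0 rstar) : |picardOp a K x - picardOp a K' x| ≤ δ / 3 := by
  have := abs_sub_weightedMean_le (F := rhsOp a K - rhsOp a K') hx.1 fun t ht =>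
    abs_rhsOp_sub_rhsOp_le ha hKc hK'c hK hK' hKK' (Icc_subset_Icc le_rfl hx.2 ht)
  rw [picardOp_sub_picardOp hKc hK'c]
  linarith

lemma abs_picardOp_sub_picardOp_param_le (hKc : Continuous K)
    (hK : ∀ t ∈ Icc 0 rstar, |K t| ≤ Rstar) (hx : x ∈ Icc 0 rstar) :
    |picardOp a K x - picardOp b K x| ≤ 37 / 18 * |a - b| := by
  have := abs_sub_weightedMean_le (F := rhsOp a K - rhsOp b K) hx.1 fun t ht =>
    abs_rhsOp_sub_rhsOp_param_le (a := a) (b := b) hK (Icc_subset_Icc le_rfl hx.2 ht)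
  rw [picardOp_sub_picardOp hKc hKc]
  linarith

end OperatorEstimates

lemma continuousOn_d2 {r : ℝ} {g : ℝ → ℝ} (hr : 0 < r) (hg : ContDiffOn ℝ 2 g (Icc 0 r)) :
    ContinuousOn (d2 r g) (Icc 0 r) :=
  (hg.derivWithin (uniqueDiffOn_Icc hr) le_rfl).continuousOn_derivWithin (uniqueDiffOn_Icc hr)
    le_rfl

section Picard

variable {a b : ℝ} {k : C(Icc (0:ℝ) rstar, ℝ)}

/-- The truncation makes the Picard map a contraction of the whole space; it does not affect fixed
points, which are bounded by `4 ≤ R*`. -/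
noncomputable def truncExtend (k : C(Icc (0:ℝ) rstar, ℝ)) (t : ℝ) : ℝ :=
  projIcc (-Rstar) Rstar (by linarith [four_le_Rstar]) (IccExtend rstar_pos.le k t)

lemma continuous_truncExtend (k : C(Icc (0:ℝ) rstar, ℝ)) : Continuous (truncExtend k) :=
  continuous_subtype_val.comp (continuous_projIcc.comp (continuous_IccExtend_iff.2 k.continuous))

lemma abs_truncExtend_le (k : C(Icc (0:ℝ) rstar, ℝ)) (t : ℝ) : |truncExtend k t| ≤ Rstar :=
  abs_le.2 (projIcc _ _ _ _).2

lemma abs_truncExtend_sub_le (k k' : C(Icc (0:ℝ) rstar, ℝ)) (t : ℝ) :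
    |truncExtend k t - truncExtend k' t| ≤ dist k k' := by
  refine (abs_projIcc_sub_projIcc _).trans ?_
  rw [IccExtend_apply, IccExtend_apply, ← Real.dist_eq]
  exact k.dist_apply_le_dist _

lemma truncExtend_of_abs_le (hk : ∀ y, |k y| ≤ Rstar) {t : ℝ} (ht : t ∈ Icc 0 rstar) :
    truncExtend k t = k ⟨t, ht⟩ := by
  rw [truncExtend, IccExtend_of_mem _ _ ht, projIcc_of_mem _ (abs_le.1 (hk _))]

noncomputable def picard (a : ℝ) (k : C(Icc (0:ℝ) rstar, ℝ)) : C(Icc (0:ℝ) rstar, ℝ) :=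
  ⟨fun x => picardOp a (truncExtend k) x,
    (continuous_picardOp (continuous_truncExtend k)).comp continuous_subtype_val⟩

lemma abs_picard_le (ha : |a| ≤ 3 / 2) (k : C(Icc (0:ℝ) rstar, ℝ)) (y : Icc (0:ℝ) rstar) :
    |picard a k y| ≤ 4 :=
  abs_picardOp_le ha (fun t _ => abs_truncExtend_le k t) y.2

lemma dist_picard_le (ha : |a| ≤ 3 / 2) (k k' : C(Icc (0:ℝ) rstar, ℝ)) :
    dist (picard a k) (picard a k') ≤ 1 / 3 * dist k k' := by
  refine (ContinuousMap.dist_le (by positivity)).2 fun y => ?_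
  rw [Real.dist_eq, one_div_mul_eq_div]
  exact abs_picardOp_sub_picardOp_le ha (continuous_truncExtend k) (continuous_truncExtend k')
    (fun t _ => abs_truncExtend_le k t) (fun t _ => abs_truncExtend_le k' t)
    (fun t _ => abs_truncExtend_sub_le k k' t) y.2

lemma dist_picard_param_le (k : C(Icc (0:ℝ) rstar, ℝ)) :
    dist (picard a k) (picard b k) ≤ 37 / 18 * |a - b| :=
  (ContinuousMap.dist_le (by positivity)).2 fun y => by
    rw [Real.dist_eq]
    exact abs_picardOp_sub_picardOp_param_le (continuous_truncExtend k)
      (fun t _ => abs_truncExtend_le k t) y.2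

lemma contractingWith_picard (ha : |a| ≤ 3 / 2) : ContractingWith (1 / 3) (picard a) :=
  ⟨by norm_num, LipschitzWith.of_dist_le_mul fun k k' => by
    simpa using dist_picard_le ha k k'⟩

end Picard

section FixedPoint

variable {a b : ℝ}

noncomputable def picardFixedPoint (a : ℝ) : C(Icc (0:ℝ) rstar, ℝ) :=
  if ha : |a| ≤ 3 / 2 then ContractingWith.fixedPoint (picard a) (contractingWith_picard ha)
  else 0

lemma picard_picardFixedPoint (ha : |a| ≤ 3 / 2) :
    picard a (picardFixedPoint a) = picardFixedPoint a := by
  rw [picardFixedPoint, dif_pos ha]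
  exact (contractingWith_picard ha).fixedPoint_isFixedPt

lemma eq_picardFixedPoint (ha : |a| ≤ 3 / 2) {k : C(Icc (0:ℝ) rstar, ℝ)} (hk : picard a k = k) :
    k = picardFixedPoint a := by
  rw [picardFixedPoint, dif_pos ha]
  exact (contractingWith_picard ha).fixedPoint_unique hk

lemma dist_picardFixedPoint_le (ha : |a| ≤ 3 / 2) (hb : |b| ≤ 3 / 2) :
    dist (picardFixedPoint a) (picardFixedPoint b) ≤ 37 / 12 * |a - b| := by
  rw [picardFixedPoint, dif_pos ha, picardFixedPoint, dif_pos hb]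
  refine ((contractingWith_picard ha).fixedPoint_lipschitz_in_map (contractingWith_picard hb)
    dist_picard_param_le).trans_eq ?_
  norm_num
  ring

lemma abs_picardFixedPoint_le (ha : |a| ≤ 3 / 2) (y : Icc (0:ℝ) rstar) :
    |picardFixedPoint a y| ≤ Rstar := by
  rw [← picard_picardFixedPoint ha]
  exact (abs_picard_le ha _ y).trans four_le_Rstar

lemma truncExtend_picardFixedPoint (ha : |a| ≤ 3 / 2) {x : ℝ} (hx : x ∈ Icc 0 rstar) :
    truncExtend (picardFixedPoint a) x = picardFixedPoint a ⟨x, hx⟩ :=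
  truncExtend_of_abs_le (abs_picardFixedPoint_le ha) hx

noncomputable def solution (a : ℝ) : ℝ → ℝ := prim (prim (truncExtend (picardFixedPoint a)))

lemma shiftedCP_solution (ha : |a| ≤ 3 / 2) : ShiftedCP a rstar (solution a) :=
  shiftedCP_prim_prim (continuous_truncExtend _) rstar_pos fun x hx => by
    rw [truncExtend_picardFixedPoint ha (Ioc_subset_Icc_self hx)]
    exact (DFunLike.congr_fun (picard_picardFixedPoint ha) ⟨x, Ioc_subset_Icc_self hx⟩).symm

lemma d2_solution (ha : |a| ≤ 3 / 2) {x : ℝ} (hx : x ∈ Icc 0 rstar) :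
    d2 rstar (solution a) x = picardFixedPoint a ⟨x, hx⟩ :=
  (d2_prim_prim (continuous_truncExtend _) rstar_pos hx).trans (truncExtend_picardFixedPoint ha hx)

lemma eqOn_solution (ha : |a| ≤ 3 / 2) {g : ℝ → ℝ} (hg : ShiftedCP a rstar g)
    (hb : ∀ x ∈ Icc 0 rstar, |d2 rstar g x| ≤ Rstar) : EqOn g (solution a) (Icc 0 rstar) := by
  let k : C(Icc (0:ℝ) rstar, ℝ) :=
    ⟨(Icc 0 rstar).domRestrict (d2 rstar g), (continuousOn_d2 rstar_pos hg.1).domRestrict⟩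
  have hk : ∀ y, |k y| ≤ Rstar := fun y => hb y y.2
  obtain ⟨hgk, hfix⟩ := eqOn_prim_prim_and_picardOp_of_shiftedCP (continuous_truncExtend k)
    rstar_pos hg fun x hx => truncExtend_of_abs_le hk hx
  have hk_fix : picard a k = k :=
    ContinuousMap.ext fun y => (hfix y.2).symm.trans (truncExtend_of_abs_le hk y.2)
  rwa [solution, ← eq_picardFixedPoint ha hk_fix]

end FixedPoint

end ShiftedCP

open ShiftedCP

/-- (i) For every `a ∈ [0, √2]` there is a unique solution `h_a ∈ C²₀([0, r*])` of the
shifted Cauchy problem with `‖h_a''‖_{C⁰([0,r*])} ≤ R*`, where `r* = 1/(36√2)`, `R* = 6√2`;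
(ii) the map `a ↦ h_a` is Lipschitz: `‖(h_{a₁} - h_{a₂})''‖_{C⁰([0,r*])} ≤ (37/12)|a₁ - a₂|`. -/
theorem shifted_CP_lipschitz_in_a :
    ∃ H : ℝ → ℝ → ℝ,
      (∀ a ∈ Icc (0:ℝ) (Real.sqrt 2),
        (ShiftedCP a rstar (H a) ∧ ∀ x ∈ Icc (0:ℝ) rstar, |d2 rstar (H a) x| ≤ Rstar) ∧
        ∀ h' : ℝ → ℝ,
          (ShiftedCP a rstar h' ∧ ∀ x ∈ Icc (0:ℝ) rstar, |d2 rstar h' x| ≤ Rstar) →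
          EqOn h' (H a) (Icc 0 rstar)) ∧
      ∀ a₁ ∈ Icc (0:ℝ) (Real.sqrt 2), ∀ a₂ ∈ Icc (0:ℝ) (Real.sqrt 2),
        ∀ x ∈ Icc (0:ℝ) rstar,
          |d2 rstar (H a₁) x - d2 rstar (H a₂) x| ≤ 37 / 12 * |a₁ - a₂| := by
  have hI : ∀ a ∈ Icc (0:ℝ) √2, |a| ≤ 3 / 2 := fun a ha =>
    abs_le.2 ⟨by linarith [ha.1], ha.2.trans sqrt_two_le⟩
  refine ⟨solution, fun a ha => ⟨⟨shiftedCP_solution (hI a ha), fun x hx => ?_⟩,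
    fun g hg => eqOn_solution (hI a ha) hg.1 hg.2⟩, fun a₁ ha₁ a₂ ha₂ x hx => ?_⟩
  · rw [d2_solution (hI a ha) hx]
    exact abs_picardFixedPoint_le (hI a ha) _
  · rw [d2_solution (hI a₁ ha₁) hx, d2_solution (hI a₂ ha₂) hx, ← Real.dist_eq]
    exact (ContinuousMap.dist_apply_le_dist _).trans
      (dist_picardFixedPoint_le (hI a₁ ha₁) (hI a₂ ha₂))
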